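/- Under the projector hypotheses, the 4-tensor T = ρ[((n−2)(n−3)/2)(g⊙g) + (P⊙P) − (n−3)(g⊙P)] satisfies T·T·T = ρ³[2(n−2)³(n−3)³(g⊙g) + 16(P⊙P) − 4(n−3)³(g⊙P)]. -/

import Mathlib

/-!
By the contraction rule `(A⊙B)·(C⊙D) = 2 (A·C)⊙(B·D) + 2 (A·D)⊙(B·C)` and the projector
relations (with `P·g = 0` obtained from `g·P = 0` by transposing, `Ḡ⁻¹` being symmetric), the
tensors `g⊙g`, `P⊙P`, `g⊙P` are mutually orthogonal for the double contraction, with squares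
`4 g⊙g`, `4 P⊙P` and `2 g⊙P`. Hence `T = a g⊙g + b P⊙P + c g⊙P` has
`T·T·T = 16a³ g⊙g + 16b³ P⊙P + 4c³ g⊙P`.
-/

open Finset

variable {ι : Type*} [Fintype ι] [DecidableEq ι]

/-- Kulkarni–Nomizu product of two 2-tensors:
`(A⊙B)_{μνλκ} = A_{μλ}B_{νκ} − A_{νλ}B_{μκ} − A_{μκ}B_{νλ} + A_{νκ}B_{μλ}`. -/
def KN (A B : ι → ι → ℝ) : ι → ι → ι → ι → ℝ :=
  fun μ ν l κ => A μ l * B ν κ - A ν l * B μ κ - A μ κ * B ν l + A ν κ * B μ l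

/-- Contraction of two 2-tensors via the inverse metric:
`(A·B)_{μκ} = Σ_{ν,λ} A_{μν}(Ḡ⁻¹)_{νλ}B_{λκ}`. -/
def dot2 (Ginv : ι → ι → ℝ) (A B : ι → ι → ℝ) : ι → ι → ℝ :=
  fun μ κ => ∑ ν, ∑ l, A μ ν * Ginv ν l * B l κ

/-- Contraction of two 4-tensors via the inverse metric:
`(R·S)_{μνλκ} = Σ R_{μνστ}(Ḡ⁻¹)_{σσ'}(Ḡ⁻¹)_{ττ'}S_{σ'τ'λκ}`. -/
def dot4 (Ginv : ι → ι → ℝ) (R S : ι → ι → ι → ι → ℝ) : ι → ι → ι → ι → ℝ :=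
  fun μ ν l κ => ∑ σ, ∑ τ, ∑ σ', ∑ τ', R μ ν σ τ * Ginv σ σ' * Ginv τ τ' * S σ' τ' l κ

/-- Trace of a 2-tensor: `tr A = Σ_{μ,ν} (Ḡ⁻¹)_{μν}A_{νμ}`. -/
def tr2 (Ginv : ι → ι → ℝ) (A : ι → ι → ℝ) : ℝ :=
  ∑ μ, ∑ ν, Ginv μ ν * A ν μ

/-- Partial trace of a 4-tensor: `R_{μν}{}^ν{}_κ = Σ_{ν,ν'} (Ḡ⁻¹)_{νν'} R_{μνν'κ}`. -/
def ptr4 (Ginv : ι → ι → ℝ) (R : ι → ι → ι → ι → ℝ) : ι → ι → ℝ :=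
  fun μ κ => ∑ ν, ∑ ν', Ginv ν ν' * R μ ν ν' κ

/-- Full trace of a 4-tensor: `R_{μν}{}^{μν} = Σ (Ḡ⁻¹)_{μμ'}(Ḡ⁻¹)_{νν'} R_{μνμ'ν'}`. -/
def ftr4 (Ginv : ι → ι → ℝ) (R : ι → ι → ι → ι → ℝ) : ℝ :=
  ∑ μ, ∑ μ', ∑ ν, ∑ ν', Ginv μ μ' * Ginv ν ν' * R μ ν μ' ν'

/-- The curvature 4-tensor of a generalized Schwarzschild–Tangherlini geometry,
`T = ρ[((n−2)(n−3)/2)(g⊙g) + (P⊙P) − (n−3)(g⊙P)]`. -/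
noncomputable def Tgst (n : ℕ) (ρ : ℝ) (g P : ι → ι → ℝ) : ι → ι → ι → ι → ℝ :=
  fun μ ν l κ => ρ * (((n : ℝ) - 2) * ((n : ℝ) - 3) / 2 * KN g g μ ν l κ
    + KN P P μ ν l κ - ((n : ℝ) - 3) * KN g P μ ν l κ)

lemma Matrix.IsSymm.of_mul_eq_one {m R : Type*} [Fintype m] [DecidableEq m] [CommRing R]
    {A B : Matrix m m R} (hA : A.IsSymm) (h : A * B = 1) : B.IsSymm :=
  Matrix.inv_eq_right_inv h ▸ hA.inv

section KulkarniNomizu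

omit [Fintype ι] [DecidableEq ι]

@[simp]
lemma KN_zero_left (B : ι → ι → ℝ) : KN 0 B = 0 := by
  funext μ ν l κ
  simp [KN]

@[simp]
lemma KN_zero_right (A : ι → ι → ℝ) : KN A 0 = 0 := by
  funext μ ν l κ
  simp [KN]

def KNComb (g P : ι → ι → ℝ) (a b c : ℝ) : ι → ι → ι → ι → ℝ :=
  a • KN g g + b • KN P P + c • KN g P

lemma Tgst_eq_KNComb (n : ℕ) (ρ : ℝ) (g P : ι → ι → ℝ) :
    Tgst n ρ g P = KNComb g P (ρ * (((n : ℝ) - 2) * ((n : ℝ) - 3) / 2)) ρ (-(ρ * ((n : ℝ) - 3))) := by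
  funext μ ν l κ
  simp only [Tgst, KNComb, Pi.add_apply, Pi.smul_apply, smul_eq_mul]
  ring

end KulkarniNomizu

section Contraction

omit [DecidableEq ι]

variable (Ginv : ι → ι → ℝ)

lemma sum_sum_mul_sum_sum (f h : ι → ι → ℝ) :
    (∑ σ, ∑ σ', f σ σ') * (∑ τ, ∑ τ', h τ τ') = ∑ σ, ∑ τ, ∑ σ', ∑ τ', f σ σ' * h τ τ' := by
  rw [sum_mul_sum]
  exact sum_congr rfl fun σ _ ↦ sum_congr rfl fun τ _ ↦ sum_mul_sum _ _ _ _

lemma two_mul_sum_four (F : ι → ι → ι → ι → ℝ) :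
    2 * ∑ σ, ∑ τ, ∑ σ', ∑ τ', F σ τ σ' τ' =
      ∑ σ, ∑ τ, ∑ σ', ∑ τ', (F σ τ σ' τ' + F τ σ τ' σ') := by
  have hswap : ∑ σ, ∑ τ, ∑ σ', ∑ τ', F σ τ σ' τ' = ∑ σ, ∑ τ, ∑ σ', ∑ τ', F τ σ τ' σ' := by
    rw [sum_comm]
    exact sum_congr rfl fun σ _ ↦ sum_congr rfl fun τ _ ↦ sum_comm
  rw [two_mul]
  nth_rewrite 2 [hswap]
  simp only [← sum_add_distrib]

lemma dot2_apply_comm {A B : ι → ι → ℝ} (hGinv : ∀ μ ν, Ginv μ ν = Ginv ν μ)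
    (hA : ∀ μ ν, A μ ν = A ν μ) (hB : ∀ μ ν, B μ ν = B ν μ) (μ κ : ι) :
    dot2 Ginv A B μ κ = dot2 Ginv B A κ μ := by
  simp only [dot2]
  rw [sum_comm]
  exact sum_congr rfl fun ν _ ↦ sum_congr rfl fun l _ ↦ by
    rw [hA μ l, hGinv l ν, hB ν κ]
    ring

lemma dot4_add_left (R R' S : ι → ι → ι → ι → ℝ) :
    dot4 Ginv (R + R') S = dot4 Ginv R S + dot4 Ginv R' S := by
  funext μ ν l κ
  simp only [dot4, Pi.add_apply, add_mul, sum_add_distrib]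

lemma dot4_add_right (R S S' : ι → ι → ι → ι → ℝ) :
    dot4 Ginv R (S + S') = dot4 Ginv R S + dot4 Ginv R S' := by
  funext μ ν l κ
  simp only [dot4, Pi.add_apply, mul_add, sum_add_distrib]

lemma dot4_smul_left (a : ℝ) (R S : ι → ι → ι → ι → ℝ) :
    dot4 Ginv (a • R) S = a • dot4 Ginv R S := by
  funext μ ν l κ
  simp only [dot4, Pi.smul_apply, smul_eq_mul, mul_sum, mul_assoc]

lemma dot4_smul_right (a : ℝ) (R S : ι → ι → ι → ι → ℝ) :
    dot4 Ginv R (a • S) = a • dot4 Ginv R S := by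
  funext μ ν l κ
  simp only [dot4, Pi.smul_apply, smul_eq_mul, mul_sum]
  refine sum_congr rfl fun σ _ ↦ sum_congr rfl fun τ _ ↦
    sum_congr rfl fun σ' _ ↦ sum_congr rfl fun τ' _ ↦ ?_
  ring

lemma KN_dot2_dot2_apply (A B C D : ι → ι → ℝ) (μ ν l κ : ι) :
    KN (dot2 Ginv A C) (dot2 Ginv B D) μ ν l κ =
      ∑ σ, ∑ τ, ∑ σ', ∑ τ',
        (A μ σ * Ginv σ σ' * C σ' l * (B ν τ * Ginv τ τ' * D τ' κ)
        - A ν σ * Ginv σ σ' * C σ' l * (B μ τ * Ginv τ τ' * D τ' κ)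
        - A μ σ * Ginv σ σ' * C σ' κ * (B ν τ * Ginv τ τ' * D τ' l)
        + A ν σ * Ginv σ σ' * C σ' κ * (B μ τ * Ginv τ τ' * D τ' l)) := by
  simp only [KN, dot2, sum_sum_mul_sum_sum, ← sum_sub_distrib, ← sum_add_distrib]

/-- Symmetrising the expansions of the right-hand products in `(σ, σ') ↔ (τ, τ')` produces exactly
the 16 terms of the left-hand side. -/
lemma dot4_KN_KN (A B C D : ι → ι → ℝ) :
    dot4 Ginv (KN A B) (KN C D) =
      (2 : ℝ) • KN (dot2 Ginv A C) (dot2 Ginv B D) + (2 : ℝ) • KN (dot2 Ginv A D) (dot2 Ginv B C) := by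
  funext μ ν l κ
  simp only [Pi.add_apply, Pi.smul_apply, smul_eq_mul, KN_dot2_dot2_apply, two_mul_sum_four,
    dot4, ← sum_add_distrib]
  refine sum_congr rfl fun σ _ ↦ sum_congr rfl fun τ _ ↦
    sum_congr rfl fun σ' _ ↦ sum_congr rfl fun τ' _ ↦ ?_
  simp only [KN]
  ring

lemma dot4_KNComb {g P : ι → ι → ℝ} (hgg : dot2 Ginv g g = g) (hPP : dot2 Ginv P P = P)
    (hgP : dot2 Ginv g P = 0) (hPg : dot2 Ginv P g = 0) (a b c a' b' c' : ℝ) :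
    dot4 Ginv (KNComb g P a b c) (KNComb g P a' b' c') =
      KNComb g P (4 * a * a') (4 * b * b') (2 * c * c') := by
  simp only [KNComb, dot4_add_left, dot4_add_right, dot4_smul_left, dot4_smul_right, dot4_KN_KN,
    hgg, hPP, hgP, hPg, KN_zero_left, KN_zero_right]
  module

end Contraction

theorem Tgst_dot_Tgst_dot_Tgst_general {n : ℕ}
    (Gbar Ginv g P : ι → ι → ℝ) (ρ : ℝ)
    (hGsymm : ∀ μ ν, Gbar μ ν = Gbar ν μ)
    (hGinv : ∀ μ l, ∑ ν, Gbar μ ν * Ginv ν l = if μ = l then (1 : ℝ) else 0)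
    (hgsymm : ∀ μ ν, g μ ν = g ν μ) (hPsymm : ∀ μ ν, P μ ν = P ν μ)
    (hgg : ∀ μ ν, dot2 Ginv g g μ ν = g μ ν)
    (hPP : ∀ μ ν, dot2 Ginv P P μ ν = P μ ν)
    (hgP : ∀ μ ν, dot2 Ginv g P μ ν = 0)
    :
    ∀ μ ν l κ,
      dot4 Ginv (dot4 Ginv (Tgst n ρ g P) (Tgst n ρ g P)) (Tgst n ρ g P) μ ν l κ =
        ρ ^ 3 * (2 * ((n : ℝ) - 2) ^ 3 * ((n : ℝ) - 3) ^ 3 * KN g g μ ν l κ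
          + 16 * KN P P μ ν l κ - 4 * ((n : ℝ) - 3) ^ 3 * KN g P μ ν l κ) := by
  have hmul : Matrix.of Gbar * Matrix.of Ginv = 1 := by
    ext μ l
    simpa [Matrix.mul_apply, Matrix.one_apply] using hGinv μ l
  have hGinv_symm : ∀ μ ν, Ginv μ ν = Ginv ν μ := fun μ ν ↦ by
    simpa using ((Matrix.IsSymm.ext fun μ ν ↦ hGsymm ν μ).of_mul_eq_one hmul).apply ν μ
  have hPg : dot2 Ginv P g = 0 :=
    funext₂ fun μ ν ↦ by rw [dot2_apply_comm Ginv hGinv_symm hPsymm hgsymm, hgP]; rfl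
  have hprod := dot4_KNComb Ginv (funext₂ hgg) (funext₂ hPP) (funext₂ hgP) hPg
  intro μ ν l κ
  rw [Tgst_eq_KNComb, hprod, hprod]
  simp only [KNComb, Pi.add_apply, Pi.smul_apply, smul_eq_mul]
  ring

/-- Under the projector hypotheses,
`T·T·T = ρ³[2(n−2)³(n−3)³(g⊙g) + 16(P⊙P) − 4(n−3)³(g⊙P)]`. -/
theorem Tgst_dot_Tgst_dot_Tgst {n : ℕ} (hn : 4 ≤ n) (hcard : Fintype.card ι = n)
    (Gbar Ginv g P : ι → ι → ℝ) (ρ : ℝ)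
    (hGsymm : ∀ μ ν, Gbar μ ν = Gbar ν μ)
    (hGinv : ∀ μ l, ∑ ν, Gbar μ ν * Ginv ν l = if μ = l then (1 : ℝ) else 0)
    (hsplit : ∀ μ ν, Gbar μ ν = g μ ν + P μ ν)
    (hgsymm : ∀ μ ν, g μ ν = g ν μ) (hPsymm : ∀ μ ν, P μ ν = P ν μ)
    (hgg : ∀ μ ν, dot2 Ginv g g μ ν = g μ ν)
    (hPP : ∀ μ ν, dot2 Ginv P P μ ν = P μ ν)
    (hgP : ∀ μ ν, dot2 Ginv g P μ ν = 0)
    (htrg : tr2 Ginv g = 2)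
    (htrP : tr2 Ginv P = (n : ℝ) - 2)
    :
    ∀ μ ν l κ,
      dot4 Ginv (dot4 Ginv (Tgst n ρ g P) (Tgst n ρ g P)) (Tgst n ρ g P) μ ν l κ =
        ρ ^ 3 * (2 * ((n : ℝ) - 2) ^ 3 * ((n : ℝ) - 3) ^ 3 * KN g g μ ν l κ
          + 16 * KN P P μ ν l κ - 4 * ((n : ℝ) - 3) ^ 3 * KN g P μ ν l κ) :=
  Tgst_dot_Tgst_dot_Tgst_general Gbar Ginv g P ρ hGsymm hGinv hgsymm hPsymm hgg hPP hgP
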